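/- arXiv:2203.03187 — 2 statements merged into one kernel-verified Lean document; each statement's English description precedes it below -/
import Mathlib

section
/- (Theorem 2) Let D : ℝ^{n×d_model} × ℝ^{n_t×d_model} → ℝ^{n_t×d_model} be a transformer decoder layer D(M, T) = MLP(MHA(MHSA(T), M, M)), where MHSA(T) = MHA'(T, T, T) is multi-head self-attention on the target sequence, MHA(·, M, M) is multi-head cross-attention onto the memory sequence M, and MLP applies a fixed function f : ℝ^{d_model} → ℝ^{d_model} to each row independently. Then for any memory permutation matrix Φ ∈ 𝒫_n, D(ΦM, T) = D(M, T). -/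
open Matrix

/-- Row-wise softmax of a real matrix. -/
noncomputable def softmax {n m : ℕ} (M : Matrix (Fin n) (Fin m) ℝ) :
    Matrix (Fin n) (Fin m) ℝ :=
  Matrix.of fun i j => Real.exp (M i j) / ∑ k, Real.exp (M i k)

/-- The permutation matrix of a permutation `p`: `Φ i j = 1` if `p i = j`, else `0`. -/
def permMatrix {n : ℕ} (p : Equiv.Perm (Fin n)) : Matrix (Fin n) (Fin n) ℝ :=
  Matrix.of fun i j => if p i = j then 1 else 0

/-- Multi-head attention with `h` heads:
`MHA(Q,K,V) = ∑ i, σ(Q Wᵢ^Q (Wᵢ^K)ᵀ Kᵀ / √d_k) V Wᵢ^V Wᵢ^O`, with row-wise softmax `σ`. -/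
noncomputable def MHA {nq n dmodel dk dv h : ℕ}
    (WQ WK : Fin h → Matrix (Fin dmodel) (Fin dk) ℝ)
    (WV : Fin h → Matrix (Fin dmodel) (Fin dv) ℝ)
    (WO : Fin h → Matrix (Fin dv) (Fin dmodel) ℝ)
    (Q : Matrix (Fin nq) (Fin dmodel) ℝ)
    (K V : Matrix (Fin n) (Fin dmodel) ℝ) : Matrix (Fin nq) (Fin dmodel) ℝ :=
  ∑ i, softmax ((Real.sqrt dk)⁻¹ • (Q * WQ i * (WK i)ᵀ * Kᵀ)) * V * WV i * WO i

/-- `MLP` applies the function `f` to each row of its input independently. -/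
def rowMap {n d : ℕ} (f : (Fin d → ℝ) → (Fin d → ℝ)) (X : Matrix (Fin n) (Fin d) ℝ) :
    Matrix (Fin n) (Fin d) ℝ :=
  Matrix.of fun i => f (X i)

/-! Permuting the memory rows permutes the columns of every cross-attention score matrix;
the row-wise softmax commutes with that column permutation, which then cancels against the
same permutation of the value rows. The self-attention on the target never sees the memory. -/

theorem permMatrix_mul {n m : ℕ} (p : Equiv.Perm (Fin n)) (M : Matrix (Fin n) (Fin m) ℝ) :
    permMatrix p * M = M.submatrix p id := by
  ext i j
  simp [mul_apply, permMatrix]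

theorem softmax_submatrix_id {n m : ℕ} (q : Equiv.Perm (Fin m)) (X : Matrix (Fin n) (Fin m) ℝ) :
    softmax (X.submatrix id q) = (softmax X).submatrix id q := by
  ext i j
  simp only [softmax, submatrix_apply, of_apply, id,
    Equiv.sum_comp q (fun k => Real.exp (X i k))]

theorem MHA_submatrix_perm {nq n dmodel dk dv h : ℕ}
    (WQ WK : Fin h → Matrix (Fin dmodel) (Fin dk) ℝ)
    (WV : Fin h → Matrix (Fin dmodel) (Fin dv) ℝ)
    (WO : Fin h → Matrix (Fin dv) (Fin dmodel) ℝ)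
    (Q : Matrix (Fin nq) (Fin dmodel) ℝ) (K V : Matrix (Fin n) (Fin dmodel) ℝ)
    (p : Equiv.Perm (Fin n)) :
    MHA WQ WK WV WO Q (K.submatrix p id) (V.submatrix p id) = MHA WQ WK WV WO Q K V := by
  refine Finset.sum_congr rfl fun i _ => ?_
  have scores : (Real.sqrt dk)⁻¹ • (Q * WQ i * (WK i)ᵀ * (K.submatrix p id)ᵀ) =
      ((Real.sqrt dk)⁻¹ • (Q * WQ i * (WK i)ᵀ * Kᵀ)).submatrix id p := by
    ext a b
    simp [mul_apply]
  rw [scores, softmax_submatrix_id, submatrix_mul_equiv, submatrix_id_id]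

/-- (Theorem 2) For a transformer decoder layer
`D(M, T) = MLP(MHA(MHSA(T), M, M))`, where `MHSA(T) = MHA'(T,T,T)` is self-attention on the
target sequence (with its own weights) and `MHA(·, M, M)` is cross-attention onto the memory,
permuting the memory does not change the output: `D(ΦM, T) = D(M, T)`. -/
theorem decoder_layer_memory_perm_invariant {n nt dmodel : ℕ}
    {dk₁ dv₁ h₁ dk₂ dv₂ h₂ : ℕ}
    (WQ₁ WK₁ : Fin h₁ → Matrix (Fin dmodel) (Fin dk₁) ℝ)
    (WV₁ : Fin h₁ → Matrix (Fin dmodel) (Fin dv₁) ℝ)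
    (WO₁ : Fin h₁ → Matrix (Fin dv₁) (Fin dmodel) ℝ)
    (WQ₂ WK₂ : Fin h₂ → Matrix (Fin dmodel) (Fin dk₂) ℝ)
    (WV₂ : Fin h₂ → Matrix (Fin dmodel) (Fin dv₂) ℝ)
    (WO₂ : Fin h₂ → Matrix (Fin dv₂) (Fin dmodel) ℝ)
    (f : (Fin dmodel → ℝ) → (Fin dmodel → ℝ))
    (M : Matrix (Fin n) (Fin dmodel) ℝ) (T : Matrix (Fin nt) (Fin dmodel) ℝ)
    (p : Equiv.Perm (Fin n)) :
    rowMap f (MHA WQ₂ WK₂ WV₂ WO₂ (MHA WQ₁ WK₁ WV₁ WO₁ T T T)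
        (permMatrix p * M) (permMatrix p * M)) =
      rowMap f (MHA WQ₂ WK₂ WV₂ WO₂ (MHA WQ₁ WK₁ WV₁ WO₁ T T T) M M) := by
  rw [permMatrix_mul, MHA_submatrix_perm]
end

section
/- (Permutation invariance of the transformer) Let E : ℝ^{n×d_model} → ℝ^{n×d_model} be a composition of transformer encoder layers, each of the form X ↦ MLP(MHSA(X)) with MHSA(X) = MHA(X, X, X) and MLP applying a fixed row-wise function, and let D : ℝ^{n×d_model} × ℝ^{n_t×d_model} → ℝ^{n_t×d_model} be a composition (in the memory argument held fixed) of decoder layers of the form (M, T) ↦ MLP(MHA(MHSA(T), M, M)). Then for any input sequence X ∈ ℝ^{n×d_model}, any target sequence T ∈ ℝ^{n_t×d_model}, and any permutation matrix Φ ∈ 𝒫_n, the transformer output satisfies D(E(ΦX), T) = D(E(X), T); that is, permuting the input tokens does not change the final output. -/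
open Matrix

/-! Writing `permMatrix p * X` as the row reindexing `X.submatrix p id`, every encoder layer is
permutation-equivariant: the softmax and the MLP act row by row, and in self-attention the
reindexing of the keys permutes the columns of the score matrix, which the softmax carries along
and the product with the equally reindexed values undoes. That cancellation also makes
cross-attention, and hence the decoder, invariant under reindexing its memory rows. -/

theorem Fin.foldl_hom {α β : Type*} {n : ℕ} (φ : α → β) {f : α → Fin n → α}
    {g : β → Fin n → β} (h : ∀ x i, g (φ x) i = φ (f x i)) (x : α) :
    Fin.foldl n g (φ x) = φ (Fin.foldl n f x) := by
  simp only [Fin.foldl_eq_foldl_finRange]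
  exact List.foldl_hom φ h

theorem softmax_submatrix_right {n m k : ℕ} (M : Matrix (Fin n) (Fin m) ℝ) (e : Fin k ≃ Fin m) :
    softmax (M.submatrix id e) = (softmax M).submatrix id e := by
  ext i j
  simp [softmax, e.sum_comp fun k => Real.exp (M i k)]

theorem rowMap_submatrix {n d k : ℕ} (f : (Fin d → ℝ) → (Fin d → ℝ))
    (X : Matrix (Fin n) (Fin d) ℝ) (g : Fin k → Fin n) :
    rowMap f (X.submatrix g id) = (rowMap f X).submatrix g id :=
  rfl

section MHA

variable {nq n dmodel dk dv h : ℕ} (WQ WK : Fin h → Matrix (Fin dmodel) (Fin dk) ℝ)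
  (WV : Fin h → Matrix (Fin dmodel) (Fin dv) ℝ) (WO : Fin h → Matrix (Fin dv) (Fin dmodel) ℝ)

theorem MHA_submatrix_query {k : ℕ} (Q : Matrix (Fin nq) (Fin dmodel) ℝ)
    (K V : Matrix (Fin n) (Fin dmodel) ℝ) (f : Fin k → Fin nq) :
    MHA WQ WK WV WO (Q.submatrix f id) K V = (MHA WQ WK WV WO Q K V).submatrix f id := by
  ext i j
  simp only [MHA, submatrix_apply, Matrix.sum_apply]
  rfl

theorem MHA_submatrix_key_value {m : ℕ} (Q : Matrix (Fin nq) (Fin dmodel) ℝ)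
    (K V : Matrix (Fin n) (Fin dmodel) ℝ) (e : Fin m ≃ Fin n) :
    MHA WQ WK WV WO Q (K.submatrix e id) (V.submatrix e id) = MHA WQ WK WV WO Q K V := by
  refine Finset.sum_congr rfl fun i _ => ?_
  have scores : (Real.sqrt dk)⁻¹ • (Q * WQ i * (WK i)ᵀ * (K.submatrix e id)ᵀ)
      = ((Real.sqrt dk)⁻¹ • (Q * WQ i * (WK i)ᵀ * Kᵀ)).submatrix id e := rfl
  rw [scores, softmax_submatrix_right, submatrix_mul_equiv, submatrix_id_id]

theorem MHA_self_submatrix {m : ℕ} (X : Matrix (Fin n) (Fin dmodel) ℝ) (e : Fin m ≃ Fin n) :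
    MHA WQ WK WV WO (X.submatrix e id) (X.submatrix e id) (X.submatrix e id)
      = (MHA WQ WK WV WO X X X).submatrix e id := by
  rw [MHA_submatrix_key_value, MHA_submatrix_query]

end MHA

/-- (Permutation invariance of the transformer) Let `E` be a composition of encoder layers
`X ↦ MLP(MHSA(X))` and `D` a composition (with the memory argument held fixed) of decoder
layers `(M, T) ↦ MLP(MHA(MHSA(T), M, M))`, each layer having its own weight matrices and
row-wise function. Then `D(E(ΦX), T) = D(E(X), T)`: permuting the input tokens does not
change the final output. -/
theorem transformer_perm_invariant {n nt dmodel : ℕ} (Le Ld : ℕ)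
    (he dke dve : Fin Le → ℕ)
    (EWQ EWK : (l : Fin Le) → Fin (he l) → Matrix (Fin dmodel) (Fin (dke l)) ℝ)
    (EWV : (l : Fin Le) → Fin (he l) → Matrix (Fin dmodel) (Fin (dve l)) ℝ)
    (EWO : (l : Fin Le) → Fin (he l) → Matrix (Fin (dve l)) (Fin dmodel) ℝ)
    (fe : Fin Le → (Fin dmodel → ℝ) → (Fin dmodel → ℝ))
    (h₁ dk₁ dv₁ h₂ dk₂ dv₂ : Fin Ld → ℕ)
    (DWQ₁ DWK₁ : (l : Fin Ld) → Fin (h₁ l) → Matrix (Fin dmodel) (Fin (dk₁ l)) ℝ)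
    (DWV₁ : (l : Fin Ld) → Fin (h₁ l) → Matrix (Fin dmodel) (Fin (dv₁ l)) ℝ)
    (DWO₁ : (l : Fin Ld) → Fin (h₁ l) → Matrix (Fin (dv₁ l)) (Fin dmodel) ℝ)
    (DWQ₂ DWK₂ : (l : Fin Ld) → Fin (h₂ l) → Matrix (Fin dmodel) (Fin (dk₂ l)) ℝ)
    (DWV₂ : (l : Fin Ld) → Fin (h₂ l) → Matrix (Fin dmodel) (Fin (dv₂ l)) ℝ)
    (DWO₂ : (l : Fin Ld) → Fin (h₂ l) → Matrix (Fin (dv₂ l)) (Fin dmodel) ℝ)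
    (fd : Fin Ld → (Fin dmodel → ℝ) → (Fin dmodel → ℝ))
    (X : Matrix (Fin n) (Fin dmodel) ℝ) (T : Matrix (Fin nt) (Fin dmodel) ℝ)
    (p : Equiv.Perm (Fin n)) :
    (let E : Matrix (Fin n) (Fin dmodel) ℝ → Matrix (Fin n) (Fin dmodel) ℝ := fun X₀ =>
      Fin.foldl Le
        (fun Y l => rowMap (fe l) (MHA (EWQ l) (EWK l) (EWV l) (EWO l) Y Y Y)) X₀
     let D : Matrix (Fin n) (Fin dmodel) ℝ → Matrix (Fin nt) (Fin dmodel) ℝ →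
        Matrix (Fin nt) (Fin dmodel) ℝ := fun M T₀ =>
      Fin.foldl Ld
        (fun Tc l => rowMap (fd l) (MHA (DWQ₂ l) (DWK₂ l) (DWV₂ l) (DWO₂ l)
          (MHA (DWQ₁ l) (DWK₁ l) (DWV₁ l) (DWO₁ l) Tc Tc Tc) M M)) T₀
     D (E (permMatrix p * X)) T = D (E X) T) := by
  intro E D
  have encoder_equivariant : ∀ X₀, E (X₀.submatrix p id) = (E X₀).submatrix p id :=
    Fin.foldl_hom (fun Y : Matrix (Fin n) (Fin dmodel) ℝ => Y.submatrix p id) fun Y l => by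
      simp only [MHA_self_submatrix, rowMap_submatrix]
  have decoder_invariant : ∀ M T₀, D (M.submatrix p id) T₀ = D M T₀ := by
    simp only [D, MHA_submatrix_key_value, implies_true]
  rw [permMatrix_mul, encoder_equivariant, decoder_invariant]
end
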